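/- Let 𝔄 be a finite-dimensional unital C*-algebra and N a norm on the complex vector space 𝔄 satisfying N(a*) = N(a) for all a ∈ 𝔄. Define N₀ : 𝔄 → [0,∞) by N₀(a) = inf{ N(a + λ·1) : λ ∈ ℂ }. Then: (1) N₀(a) = 0 if and only if a ∈ ℂ·1; and (2) the topology induced by ρ_{N₀} on S(𝔄) is weaker than the weak* topology, i.e., for every state ν and every ε > 0 there is a weak* open set U containing ν such that every state ν' ∈ U satisfies ρ_{N₀}(ν',ν) < ε. (Hence (𝔄, 𝔄, N₀) is a compact quantum metric space.) -/

import Mathlib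

/-!
In finite dimensions the norm `N` dominates the C*-norm: `‖x‖ ≤ C * N x`. Taking the infimum
over the translates `a + c • 1` turns this into `infDist a (ℂ ∙ 1) ≤ C * N₀ a`, so `N₀ a = 0`
forces `a` into the closed line `ℂ ∙ 1`. For two states `φ, ψ` the functional `φ - ψ` kills `1`,
so `|φ a - ψ a| = |(φ - ψ) (a + c • 1)| ≤ C ‖φ - ψ‖ N (a + c • 1)`, whence
`ρ_{N₀}(φ, ψ) ≤ C ‖φ - ψ‖`. On the finite-dimensional dual the dual norm is weak* continuous,
which gives the weak* neighbourhoods.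
-/

open scoped ENNReal

noncomputable section

variable {A : Type*} [CStarAlgebra A]

/-- Positivity of `φ (star a * a)` in `ℂ` is encoded as nonnegative real part and vanishing
imaginary part. -/
def IsState (φ : WeakDual ℂ A) : Prop :=
  φ 1 = 1 ∧ ∀ a : A, 0 ≤ (φ (star a * a)).re ∧ (φ (star a * a)).im = 0

def rhoL (L : A → ℝ) (μ ν : WeakDual ℂ A) : ℝ≥0∞ :=
  ⨆ a ∈ {a : A | L a ≤ 1}, (‖μ a - ν a‖₊ : ℝ≥0∞)

def Nzero (N : A → ℝ) (a : A) : ℝ :=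
  ⨅ c : ℂ, N (a + c • (1 : A))

section FiniteDimensional

variable {𝕜 E : Type*} [NontriviallyNormedField 𝕜] [CompleteSpace 𝕜]
  [NormedAddCommGroup E] [NormedSpace 𝕜 E] [FiniteDimensional 𝕜 E]

/-- A copy of `E` without its norm, so that it can be normed by a seminorm on `E`. -/
def WithSeminorm (E : Type*) : Type _ := E

theorem Seminorm.exists_norm_le_mul_of_finiteDimensional (p : Seminorm 𝕜 E)
    (hp : ∀ x, p x = 0 → x = 0) : ∃ C, 0 < C ∧ ∀ x, ‖x‖ ≤ C * p x := by
  let : AddCommGroup (WithSeminorm E) := inferInstanceAs (AddCommGroup E)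
  let : Module 𝕜 (WithSeminorm E) := inferInstanceAs (Module 𝕜 E)
  let : NormedAddCommGroup (WithSeminorm E) :=
    AddGroupNorm.toNormedAddCommGroup { p.toAddGroupSeminorm with eq_zero_of_map_eq_zero' := hp }
  let : NormedSpace 𝕜 (WithSeminorm E) := ⟨fun c x => (map_smul_eq_mul p c x).le⟩
  have : FiniteDimensional 𝕜 (WithSeminorm E) :=
    Module.Finite.equiv (LinearEquiv.refl 𝕜 E : E ≃ₗ[𝕜] WithSeminorm E)
  let e : WithSeminorm E →ₗ[𝕜] E := LinearMap.id
  exact SemilinearMapClass.bound_of_continuous e e.continuous_of_finiteDimensional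

theorem WeakDual.continuous_toStrongDual_of_finiteDimensional :
    Continuous (toStrongDual : WeakDual 𝕜 E → StrongDual 𝕜 E) :=
  have : FiniteDimensional 𝕜 (WeakDual 𝕜 E) := Module.Finite.equiv (toStrongDual (E := E)).symm
  LinearMap.continuous_of_finiteDimensional (toStrongDual (𝕜 := 𝕜) (E := E)).toLinearMap

end FiniteDimensional

section Nzero

variable (N : A → ℝ) {C : ℝ}

theorem le_mul_nzero (hC : 0 ≤ C) {x : ℝ} {a : A} (h : ∀ c : ℂ, x ≤ C * N (a + c • 1)) :
    x ≤ C * Nzero N a := by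
  rw [Nzero, Real.mul_iInf_of_nonneg hC]
  exact le_ciInf h

theorem infDist_le_mul_nzero (hC : 0 ≤ C) (hN : ∀ x, ‖x‖ ≤ C * N x) (a : A) :
    Metric.infDist a (ℂ ∙ (1 : A)) ≤ C * Nzero N a :=
  le_mul_nzero N hC fun c => calc
    Metric.infDist a (ℂ ∙ (1 : A)) ≤ dist a (-c • 1) :=
      Metric.infDist_le_dist_of_mem (Submodule.smul_mem _ _ (Submodule.mem_span_singleton_self 1))
    _ = ‖a + c • 1‖ := by rw [dist_eq_norm, neg_smul, sub_neg_eq_add]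
    _ ≤ C * N (a + c • 1) := hN _

theorem norm_apply_sub_apply_le_mul_nzero (hC : 0 ≤ C) (hN : ∀ x, ‖x‖ ≤ C * N x)
    {φ ψ : WeakDual ℂ A} (h1 : φ 1 = ψ 1) (a : A) :
    ‖φ a - ψ a‖ ≤ C * ‖WeakDual.toStrongDual (φ - ψ)‖ * Nzero N a := by
  set g := WeakDual.toStrongDual (φ - ψ)
  refine le_mul_nzero N (by positivity) fun c => ?_
  have hg : g (a + c • 1) = φ a - ψ a := by simp [g, h1]
  calc ‖φ a - ψ a‖ = ‖g (a + c • 1)‖ := by rw [hg]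
    _ ≤ ‖g‖ * ‖a + c • 1‖ := g.le_opNorm _
    _ ≤ ‖g‖ * (C * N (a + c • 1)) := by gcongr; exact hN _
    _ = C * ‖g‖ * N (a + c • 1) := by ring

theorem rhoL_nzero_le (hC : 0 ≤ C) (hN : ∀ x, ‖x‖ ≤ C * N x) {φ ψ : WeakDual ℂ A}
    (h1 : φ 1 = ψ 1) : rhoL (Nzero N) φ ψ ≤ ENNReal.ofReal (C * ‖WeakDual.toStrongDual (φ - ψ)‖) := by
  refine iSup₂_le fun a (ha : Nzero N a ≤ 1) => ?_
  rw [← enorm_eq_nnnorm, ← ofReal_norm]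
  refine ENNReal.ofReal_le_ofReal ?_
  calc ‖φ a - ψ a‖ ≤ C * ‖WeakDual.toStrongDual (φ - ψ)‖ * Nzero N a :=
        norm_apply_sub_apply_le_mul_nzero N hC hN h1 a
    _ ≤ C * ‖WeakDual.toStrongDual (φ - ψ)‖ := by
        exact mul_le_of_le_one_right (by positivity) ha

theorem nzero_smul_one (p : Seminorm ℂ A) (c : ℂ) : Nzero p (c • 1) = 0 := by
  refine le_antisymm ?_ (Real.iInf_nonneg fun _ => apply_nonneg p _)
  calc Nzero p (c • 1) ≤ p (c • 1 + -c • 1) :=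
        ciInf_le ⟨0, Set.forall_mem_range.2 fun _ => apply_nonneg p _⟩ (-c)
    _ = 0 := by rw [neg_smul, add_neg_cancel, map_zero]

theorem nzero_eq_zero_iff (p : Seminorm ℂ A) (hC : 0 ≤ C) (hp : ∀ x, ‖x‖ ≤ C * p x) (a : A) :
    Nzero p a = 0 ↔ ∃ c : ℂ, a = c • 1 := by
  refine ⟨fun h => ?_, fun ⟨c, hc⟩ => hc ▸ nzero_smul_one p c⟩
  have hdist : Metric.infDist a (ℂ ∙ (1 : A)) = 0 :=
    le_antisymm (by simpa [h] using infDist_le_mul_nzero p hC hp a) Metric.infDist_nonneg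
  have hmem : a ∈ ℂ ∙ (1 : A) :=
    ((Submodule.closed_of_finiteDimensional _).mem_iff_infDist_zero ⟨0, Submodule.zero_mem _⟩).2
      hdist
  obtain ⟨c, hc⟩ := Submodule.mem_span_singleton.1 hmem
  exact ⟨c, hc.symm⟩

end Nzero

theorem finiteDimensional_quantum_metric_general [FiniteDimensional ℂ A] (N : A → ℝ)
    (hN_add : ∀ a b : A, N (a + b) ≤ N a + N b)
    (hN_smul : ∀ (c : ℂ) (a : A), N (c • a) = ‖c‖ * N a)
    (hN_zero : ∀ a : A, N a = 0 ↔ a = 0) :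
    (∀ a : A, Nzero N a = 0 ↔ ∃ c : ℂ, a = c • (1 : A)) ∧
      (∀ ν : WeakDual ℂ A, IsState ν → ∀ ε : ℝ, 0 < ε →
        ∃ U : Set (WeakDual ℂ A), IsOpen U ∧ ν ∈ U ∧
          ∀ ν' ∈ U, IsState ν' → rhoL (Nzero N) ν' ν < ENNReal.ofReal ε) := by
  let p := Seminorm.of N hN_add hN_smul
  obtain ⟨C, hC, hCp⟩ := p.exists_norm_le_mul_of_finiteDimensional fun x => (hN_zero x).1
  refine ⟨nzero_eq_zero_iff p hC.le hCp, fun ν hν ε hε => ?_⟩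
  have hU : IsOpen {ν' : WeakDual ℂ A | C * ‖WeakDual.toStrongDual (ν' - ν)‖ < ε} :=
    isOpen_lt (continuous_const.mul
      (WeakDual.continuous_toStrongDual_of_finiteDimensional.comp (continuous_sub_right ν)).norm)
      continuous_const
  refine ⟨_, hU, by simpa using hε, fun ν' hν'U hν' => ?_⟩
  calc rhoL (Nzero N) ν' ν ≤ ENNReal.ofReal (C * ‖WeakDual.toStrongDual (ν' - ν)‖) :=
        rhoL_nzero_le p hC.le hCp (hν'.1.trans hν.1.symm)
    _ < ENNReal.ofReal ε := (ENNReal.ofReal_lt_ofReal_iff hε).2 hν'U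

/-- Example 3 of the paper.  Let `A` be a finite-dimensional unital
C*-algebra and `N` a norm on the complex vector space `A` with `N (star a) = N a`.  Let
`N₀ a = inf { N (a + λ·1) : λ ∈ ℂ }`.  Then (1) `N₀ a = 0` iff `a ∈ ℂ·1`, and (2) the
topology induced by `ρ_{N₀}` on the state space of `A` is weaker than the weak* topology;
hence `(A, A, N₀)` is a compact quantum metric space. -/
theorem finiteDimensional_quantum_metric [FiniteDimensional ℂ A] (N : A → ℝ)
    (hN_add : ∀ a b : A, N (a + b) ≤ N a + N b)
    (hN_smul : ∀ (c : ℂ) (a : A), N (c • a) = ‖c‖ * N a)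
    (hN_zero : ∀ a : A, N a = 0 ↔ a = 0)
    (hN_star : ∀ a : A, N (star a) = N a) :
    (∀ a : A, Nzero N a = 0 ↔ ∃ c : ℂ, a = c • (1 : A)) ∧
      (∀ ν : WeakDual ℂ A, IsState ν → ∀ ε : ℝ, 0 < ε →
        ∃ U : Set (WeakDual ℂ A), IsOpen U ∧ ν ∈ U ∧
          ∀ ν' ∈ U, IsState ν' → rhoL (Nzero N) ν' ν < ENNReal.ofReal ε) :=
  finiteDimensional_quantum_metric_general N hN_add hN_smul hN_zero

end
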